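/- arXiv:1405.7608 — 2 statements merged into one kernel-verified Lean document; each statement's English description precedes it below -/
import Mathlib

section
/- For every s with 0 ≤ s ≤ r and every m with 1 ≤ m ≤ p-1, the m-th convolution power of z_{p^s} in H satisfies z_{p^s}^m = m!·z_{m p^s}; moreover, for every s with 0 ≤ s ≤ r-1 one has z_{p^s}^p = 0 in H. -/
open Polynomial TensorProduct

noncomputable section

/-- The truncated polynomial algebra `K[t]/(t^{p^n})`, underlying the Hopf algebra
`H_{n,r,f}`. -/
abbrev TruncAlg (K : Type) [Field K] (p n : ℕ) : Type :=
  AdjoinRoot (X ^ p ^ n : K[X])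

/-- `t`, the image of `X` in `K[t]/(t^{p^n})`. -/
def tgen (K : Type) [Field K] (p n : ℕ) : TruncAlg K p n :=
  AdjoinRoot.root _

/-- The basis `1, t, t^2, …, t^{p^n-1}` of `K[t]/(t^{p^n})`. -/
def tbasis (K : Type) [Field K] (p n : ℕ) :
    Module.Basis (Fin (p ^ n)) K (TruncAlg K p n) :=
  (AdjoinRoot.powerBasis (f := (X ^ p ^ n : K[X]))
    (pow_ne_zero _ Polynomial.X_ne_zero)).basis.reindex
    (finCongr (by simp))

/-- The dual basis functional `z_j ∈ H = H_{n,r,f}^*`, with `z_j (t^i) = δ_{ij}`;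
junk value `0` out of range. -/
def zdual (K : Type) [Field K] (p n : ℕ) (j : ℕ) :
    Module.Dual K (TruncAlg K p n) :=
  if h : j < p ^ n then (tbasis K p n).coord ⟨j, h⟩ else 0

/-- The coefficient `1/(ℓ!(p-ℓ)!)`, computed in the prime field of `K`. -/
def pfCoeff (K : Type) [Field K] (p ℓ : ℕ) : K :=
  ((ℓ.factorial * (p - ℓ).factorial : ℕ) : K)⁻¹

/-- The element `Δ(t) = t⊗1 + 1⊗t + f Σ_{ℓ=1}^{p-1} (1/(ℓ!(p-ℓ)!)) t^{p^r ℓ} ⊗ t^{p^r (p-ℓ)}`. -/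
def Delta_t (K : Type) [Field K] (p n r : ℕ) (f : K) :
    TruncAlg K p n ⊗[K] TruncAlg K p n :=
  tgen K p n ⊗ₜ 1 + 1 ⊗ₜ tgen K p n +
    f • ∑ ℓ ∈ Finset.Icc 1 (p - 1),
      pfCoeff K p ℓ • ((tgen K p n ^ (p ^ r * ℓ)) ⊗ₜ[K] (tgen K p n ^ (p ^ r * (p - ℓ))))

/-- The comultiplication of `H_{n,r,f}` as a linear map, determined by `Δ(t^i) = Δ(t)^i`
(it is the unique `K`-algebra map with `t ↦ Δ(t)`). -/
def DeltaMap (K : Type) [Field K] (p n r : ℕ) (f : K) :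
    TruncAlg K p n →ₗ[K] TruncAlg K p n ⊗[K] TruncAlg K p n :=
  (tbasis K p n).constr K fun i => (Delta_t K p n r f) ^ (i : ℕ)

/-- Convolution product on `H = (H_{n,r,f})^*`:  `(z * z')(h) = mult ((z ⊗ z')(Δ h))`. -/
def conv (K : Type) [Field K] (p n r : ℕ) (f : K)
    (z z' : Module.Dual K (TruncAlg K p n)) : Module.Dual K (TruncAlg K p n) :=
  (LinearMap.mul' K K) ∘ₗ (TensorProduct.map z z') ∘ₗ DeltaMap K p n r f

/-- Convolution powers; the 0th power is the unit `z_0 = ε` of `H`. -/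
def convPow (K : Type) [Field K] (p n r : ℕ) (f : K)
    (z : Module.Dual K (TruncAlg K p n)) : ℕ → Module.Dual K (TruncAlg K p n)
  | 0 => zdual K p n 0
  | m + 1 => conv K p n r f (convPow K p n r f z m) z

/-- The convolution product `z_1^{j 0} · z_p^{j 1} ⋯ z_{p^{m-1}}^{j (m-1)}` in `H`. -/
def zprod (K : Type) [Field K] (p n r : ℕ) (f : K)
    (j : ℕ → ℕ) : ℕ → Module.Dual K (TruncAlg K p n)
  | 0 => zdual K p n 0
  | m + 1 => conv K p n r f (zprod K p n r f j m)
      (convPow K p n r f (zdual K p n (p ^ m)) (j m))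

/-!
`(z_a z_b)(t^i)` is the coefficient of `t^a ⊗ t^b` in `Δ(t)^i`. Every correction term
`t^{p^r ℓ} ⊗ t^{p^r (p-ℓ)}` of `Δ(t)` has total degree `p^{r+1}`, so for `a + b < p^{r+1}` only
`t ⊗ 1 + 1 ⊗ t` contributes and `z_a z_b = C(a+b, a) z_{a+b}`. By Lucas,
`C((m+1) p^s, m p^s) ≡ m + 1 (mod p)`, hence `z_{p^s}^m = m! z_{m p^s}` whenever `m p^s < p^{r+1}`;
for `m = p` the factor `p!` vanishes.
-/

section Dual

variable {K : Type} [Field K] {p n : ℕ}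

lemma tbasis_apply (i : Fin (p ^ n)) : tbasis K p n i = tgen K p n ^ (i : ℕ) := by
  rw [tbasis, Module.Basis.reindex_apply, PowerBasis.basis_eq_pow]
  simp [tgen, AdjoinRoot.powerBasis_gen]

lemma tgen_pow_eq_zero : tgen K p n ^ p ^ n = 0 := by
  rw [tgen, ← AdjoinRoot.mk_X, ← map_pow, AdjoinRoot.mk_self]

lemma zdual_tgen_pow {j : ℕ} (hj : j < p ^ n) (i : ℕ) :
    zdual K p n j (tgen K p n ^ i) = if i = j then 1 else 0 := by
  rcases lt_or_ge i (p ^ n) with hi | hi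
  · rw [zdual, dif_pos hj, ← tbasis_apply ⟨i, hi⟩, Module.Basis.coord_apply,
      Module.Basis.repr_self, Finsupp.single_apply]
    simp [Fin.ext_iff]
  · obtain ⟨k, rfl⟩ := Nat.exists_eq_add_of_le hi
    rw [pow_add, tgen_pow_eq_zero, zero_mul, map_zero, if_neg (by omega)]

lemma zdual_mul_tgen_pow_eq_zero {j e : ℕ} (hj : j < p ^ n) (hje : j < e)
    (x : TruncAlg K p n) : zdual K p n j (x * tgen K p n ^ e) = 0 := by
  have h : zdual K p n j ∘ₗ LinearMap.mulRight K (tgen K p n ^ e) = 0 := by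
    refine (tbasis K p n).ext fun i => ?_
    rw [LinearMap.comp_apply, LinearMap.mulRight_apply, tbasis_apply, ← pow_add,
      zdual_tgen_pow hj, if_neg (by omega), LinearMap.zero_apply]
  simpa using LinearMap.congr_fun h x

lemma DeltaMap_tgen_pow (r : ℕ) (f : K) {i : ℕ} (hi : i < p ^ n) :
    DeltaMap K p n r f (tgen K p n ^ i) = Delta_t K p n r f ^ i := by
  rw [← tbasis_apply ⟨i, hi⟩, DeltaMap, Module.Basis.constr_basis]

def zdualPairing (K : Type) [Field K] (p n a b : ℕ) :
    TruncAlg K p n ⊗[K] TruncAlg K p n →ₗ[K] K :=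
  LinearMap.mul' K K ∘ₗ TensorProduct.map (zdual K p n a) (zdual K p n b)

variable {a b : ℕ}

lemma zdualPairing_tmul (x y : TruncAlg K p n) :
    zdualPairing K p n a b (x ⊗ₜ y) = zdual K p n a x * zdual K p n b y := by
  simp [zdualPairing]

lemma conv_zdual_apply (r : ℕ) (f : K) (h : TruncAlg K p n) :
    conv K p n r f (zdual K p n a) (zdual K p n b) h =
      zdualPairing K p n a b (DeltaMap K p n r f h) := rfl

lemma zdualPairing_mul_tmul_tgen_pow_eq_zero (ha : a < p ^ n) (hb : b < p ^ n) {d e : ℕ}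
    (h : a < d ∨ b < e) (w : TruncAlg K p n ⊗[K] TruncAlg K p n) :
    zdualPairing K p n a b (w * ((tgen K p n ^ d) ⊗ₜ (tgen K p n ^ e))) = 0 := by
  induction w with
  | zero => simp
  | tmul x y =>
    rw [Algebra.TensorProduct.tmul_mul_tmul, zdualPairing_tmul]
    rcases h with h | h
    · rw [zdual_mul_tgen_pow_eq_zero ha h, zero_mul]
    · rw [zdual_mul_tgen_pow_eq_zero hb h, mul_zero]
  | add x y hx hy => rw [add_mul, map_add, hx, hy, add_zero]

def primitiveT (K : Type) [Field K] (p n : ℕ) : TruncAlg K p n ⊗[K] TruncAlg K p n :=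
  tgen K p n ⊗ₜ 1 + 1 ⊗ₜ tgen K p n

lemma zdualPairing_primitiveT_pow (ha : a < p ^ n) (hb : b < p ^ n) (i : ℕ) :
    zdualPairing K p n a b (primitiveT K p n ^ i) =
      if i = a + b then ((a + b).choose a : K) else 0 := by
  have hterm (k : ℕ) : zdualPairing K p n a b ((tgen K p n ⊗ₜ (1 : TruncAlg K p n)) ^ k *
      ((1 : TruncAlg K p n) ⊗ₜ tgen K p n) ^ (i - k) * (i.choose k : TruncAlg K p n ⊗[K] _)) =
      (if k = a then 1 else 0) * (if i - k = b then 1 else 0) * (i.choose k : K) := by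
    rw [mul_comm, ← nsmul_eq_mul, map_nsmul, nsmul_eq_mul, mul_comm,
      Algebra.TensorProduct.tmul_pow, Algebra.TensorProduct.tmul_pow, one_pow, one_pow,
      Algebra.TensorProduct.tmul_mul_tmul, mul_one, one_mul, zdualPairing_tmul,
      zdual_tgen_pow ha, zdual_tgen_pow hb]
  rw [primitiveT, add_pow, map_sum, Finset.sum_congr rfl fun k _ => hterm k,
    Finset.sum_eq_single a (fun k _ hk => by simp [hk])
      (fun ha' => by simp [Nat.choose_eq_zero_of_lt (by simpa using ha')])]
  by_cases hi : i = a + b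
  · subst hi
    simp
  · obtain h | h : i < a ∨ i - a ≠ b := by omega
    · simp [hi, Nat.choose_eq_zero_of_lt h]
    · simp [hi, h]

section Comultiplication

variable (r : ℕ) (f : K)

lemma Delta_t_sub_primitiveT : Delta_t K p n r f - primitiveT K p n =
    f • ∑ ℓ ∈ Finset.Icc 1 (p - 1),
      pfCoeff K p ℓ • ((tgen K p n ^ (p ^ r * ℓ)) ⊗ₜ[K] (tgen K p n ^ (p ^ r * (p - ℓ)))) :=
  add_sub_cancel_left _ _

lemma zdualPairing_Delta_t_pow (ha : a < p ^ n) (hb : b < p ^ n) (hab : a + b < p ^ (r + 1))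
    (i : ℕ) : zdualPairing K p n a b (Delta_t K p n r f ^ i) =
      zdualPairing K p n a b (primitiveT K p n ^ i) := by
  have hsplit (ℓ : ℕ) (hℓ : ℓ ∈ Finset.Icc 1 (p - 1)) :
      a < p ^ r * ℓ ∨ b < p ^ r * (p - ℓ) := by
    by_contra! h
    have := add_le_add h.1 h.2
    rw [← mul_add, Nat.add_sub_cancel' (by grind), ← pow_succ] at this
    omega
  obtain ⟨c, hc⟩ := sub_dvd_pow_sub_pow (Delta_t K p n r f) (primitiveT K p n) i
  rw [← sub_eq_zero, ← map_sub, hc, Delta_t_sub_primitiveT, mul_comm, mul_smul_comm,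
    Finset.mul_sum, map_smul, map_sum, Finset.sum_eq_zero, smul_zero]
  intro ℓ hℓ
  rw [mul_smul_comm, map_smul,
    zdualPairing_mul_tmul_tgen_pow_eq_zero ha hb (hsplit ℓ hℓ), smul_zero]

lemma conv_zdual_zdual (habn : a + b < p ^ n) (habr : a + b < p ^ (r + 1)) :
    conv K p n r f (zdual K p n a) (zdual K p n b) =
      ((a + b).choose a : K) • zdual K p n (a + b) := by
  have ha : a < p ^ n := by omega
  have hb : b < p ^ n := by omega
  refine (tbasis K p n).ext fun i => ?_
  rw [tbasis_apply, conv_zdual_apply, DeltaMap_tgen_pow r f i.isLt,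
    zdualPairing_Delta_t_pow r f ha hb habr, zdualPairing_primitiveT_pow ha hb,
    LinearMap.smul_apply, zdual_tgen_pow habn]
  split_ifs <;> simp

lemma conv_smul_left (c : K) (z z' : Module.Dual K (TruncAlg K p n)) :
    conv K p n r f (c • z) z' = c • conv K p n r f z z' := by
  ext x
  simp [conv, TensorProduct.map_smul_left]

variable [Fact p.Prime] [CharP K p] {s : ℕ}

lemma conv_zdual_mul_pow_zdual_pow {m : ℕ} (hn : (m + 1) * p ^ s < p ^ n)
    (hr : (m + 1) * p ^ s < p ^ (r + 1)) :
    conv K p n r f (zdual K p n (m * p ^ s)) (zdual K p n (p ^ s)) =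
      ((m + 1 : ℕ) : K) • zdual K p n ((m + 1) * p ^ s) := by
  have hsum : m * p ^ s + p ^ s = (m + 1) * p ^ s := (add_one_mul m _).symm
  have hchoose : ((m + 1) * p ^ s).choose (m * p ^ s) ≡ m + 1 [MOD p] := by
    simpa only [mul_comm _ (p ^ s), Nat.choose_succ_self_right] using
      Choose.choose_pow_mul_pow_mul_modEq_choose_nat (p := p) (k := s) (a := m + 1) (b := m)
  rw [conv_zdual_zdual r f (hsum ▸ hn) (hsum ▸ hr), hsum, CharP.natCast_eq_natCast' K p hchoose]

lemma convPow_zdual_prime_pow {m : ℕ} (hn : m * p ^ s < p ^ n) (hr : m * p ^ s < p ^ (r + 1)) :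
    convPow K p n r f (zdual K p n (p ^ s)) m = (m.factorial : K) • zdual K p n (m * p ^ s) := by
  induction m with
  | zero => simp [convPow]
  | succ m ih =>
    have hle : m * p ^ s ≤ (m + 1) * p ^ s := Nat.mul_le_mul_right _ m.le_succ
    rw [convPow, ih (by omega) (by omega), conv_smul_left,
      conv_zdual_mul_pow_zdual_pow r f hn hr, smul_smul, Nat.factorial_succ,
      Nat.cast_mul, mul_comm]

end Comultiplication

end Dual

theorem convPow_zdual_eq_general
    (p : ℕ) [Fact p.Prime] (F : Type) [Field F] [CharP F p]
    (n r : ℕ) (hrn : r < n)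
    (f : LaurentSeries F) :
    (∀ s m : ℕ, s ≤ r → 1 ≤ m → m ≤ p - 1 →
      convPow (LaurentSeries F) p n r f (zdual (LaurentSeries F) p n (p ^ s)) m
        = (m.factorial : LaurentSeries F) • zdual (LaurentSeries F) p n (m * p ^ s)) ∧
    (∀ s : ℕ, s < r →
      convPow (LaurentSeries F) p n r f (zdual (LaurentSeries F) p n (p ^ s)) p = 0) := by
  have : CharP (LaurentSeries F) p :=
    charP_of_injective_algebraMap (algebraMap F (LaurentSeries F)).injective p
  have hp : 0 < p := (Fact.out : p.Prime).pos
  have hrn' : p ^ (r + 1) ≤ p ^ n := Nat.pow_le_pow_right hp hrn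
  refine ⟨fun s m hs _ hm => ?_, fun s hs => ?_⟩
  · have hmr : m * p ^ s < p ^ (r + 1) := calc
      m * p ^ s ≤ (p - 1) * p ^ r := Nat.mul_le_mul hm (Nat.pow_le_pow_right hp hs)
      _ < p * p ^ r := by gcongr; omega
      _ = p ^ (r + 1) := (pow_succ' p r).symm
    exact convPow_zdual_prime_pow r f (by omega) hmr
  · have hpr : p * p ^ s < p ^ (r + 1) := by
      rw [← pow_succ']
      exact Nat.pow_lt_pow_right (Fact.out : p.Prime).one_lt (by omega)
    have hfact : (p.factorial : LaurentSeries F) = 0 :=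
      (CharP.cast_eq_zero_iff _ p _).mpr (Nat.dvd_factorial hp le_rfl)
    rw [convPow_zdual_prime_pow r f (by omega) hpr, hfact, zero_smul]

/-- In `H = H_{n,r,f}^*`, for `0 ≤ s ≤ r` and `1 ≤ m ≤ p-1` one has
`z_{p^s}^m = m!·z_{m p^s}` (convolution powers), and for `0 ≤ s ≤ r-1` one has
`z_{p^s}^p = 0`. -/
theorem convPow_zdual_eq
    (p : ℕ) [Fact p.Prime] (F : Type) [Field F] [Fintype F] [CharP F p]
    (n r : ℕ) (hr : 0 < r) (hrn : r < n) (hn2r : n ≤ 2 * r)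
    (f : LaurentSeries F) (hf : f ≠ 0) :
    (∀ s m : ℕ, s ≤ r → 1 ≤ m → m ≤ p - 1 →
      convPow (LaurentSeries F) p n r f (zdual (LaurentSeries F) p n (p ^ s)) m
        = (m.factorial : LaurentSeries F) • zdual (LaurentSeries F) p n (m * p ^ s)) ∧
    (∀ s : ℕ, s < r →
      convPow (LaurentSeries F) p n r f (zdual (LaurentSeries F) p n (p ^ s)) p = 0) :=
  convPow_zdual_eq_general p F n r hrn f

end
end

section
/- Let h ∈ ℤ with 2 - p^n ≤ h ≤ 1. For 0 ≤ j ≤ p^n - 1 define d_h(j) = ⌊(j + 1 - h)/p^n⌋ and w_h(j) = min{ d_h(i + j) - d_h(i) : 0 ≤ i ≤ p^n - 1 and i_s + j_s ≤ p - 1 for all 0 ≤ s ≤ n-1 }, where i_s and j_s denote base-p digits. Then w_h(j) = d_h(j) for all 0 ≤ j ≤ p^n - 1 if and only if 2h > 1 - p^n. -/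
/-- `d_h(j) = ⌊(j + 1 - h)/p^n⌋` (the case `b = 1` of the numerical data of
Byott–Childs–Elder). -/
def dfun (p n : ℕ) (h : ℤ) (j : ℕ) : ℤ := ((j : ℤ) + 1 - h) / (p : ℤ) ^ n

/-- `w_h(j) = min { d_h(i+j) - d_h(i) : 0 ≤ i ≤ p^n - 1, i_s + j_s ≤ p-1 for all s }`. -/
noncomputable def wfun (p n : ℕ) (h : ℤ) (j : ℕ) : ℤ :=
  sInf {k : ℤ | ∃ i : ℕ, i < p ^ n ∧
    (∀ s : ℕ, s < n → i / p ^ s % p + j / p ^ s % p ≤ p - 1) ∧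
    k = dfun p n h (i + j) - dfun p n h i}

/-! Write `t = p^n - 1 + h`, so `1 ≤ t ≤ p^n`. On `[0, p^n)` the function `d_h` is the indicator
of `[t, p^n)`, and if the base-`p` digits of `i, j < p^n` add without carry then `i + j < p^n`.
If `2h > 1 - p^n`, i.e. `2t ≥ p^n`, two numbers `≥ t` cannot have sum `< p^n`; hence
`d_h(i+j) - d_h(i) ≥ d_h(j)`, with equality at `i = 0`. Otherwise `t` and its digitwise complement
`p^n - 1 - t = -h` are both `≥ t`, so `w_h(t) ≤ d_h(p^n - 1) - d_h(-h) = 0 < 1 = d_h(t)`. -/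

def NoCarry (p n i j : ℕ) : Prop :=
  ∀ s : ℕ, s < n → i / p ^ s % p + j / p ^ s % p ≤ p - 1

theorem noCarry_succ_iff {p n i j : ℕ} :
    NoCarry p (n + 1) i j ↔ i % p + j % p ≤ p - 1 ∧ NoCarry p n (i / p) (j / p) := by
  simp only [NoCarry, Nat.forall_lt_succ_left, pow_zero, Nat.div_one, pow_succ',
    Nat.div_div_eq_div_mul]

theorem noCarry_zero_left {p : ℕ} (hp : 0 < p) (n j : ℕ) : NoCarry p n 0 j := by
  intro s _
  have := Nat.mod_lt (j / p ^ s) hp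
  simp only [Nat.zero_div, Nat.zero_mod]
  omega

theorem NoCarry.add_lt_pow {p n i j : ℕ} (hc : NoCarry p n i j) (hi : i < p ^ n)
    (hj : j < p ^ n) : i + j < p ^ n := by
  induction n generalizing i j with
  | zero => simp only [pow_zero] at hi hj ⊢; omega
  | succ n ih =>
    have hp : 0 < p := Nat.pos_of_ne_zero (by rintro rfl; simp at hi)
    obtain ⟨hlow, hhigh⟩ := noCarry_succ_iff.mp hc
    rw [pow_succ'] at hi hj ⊢
    have hquot : i / p + j / p + 1 ≤ p ^ n :=
      ih hhigh (Nat.div_lt_of_lt_mul hi) (Nat.div_lt_of_lt_mul hj)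
    have hmul := Nat.mul_le_mul_left p hquot
    have := Nat.div_add_mod i p
    have := Nat.div_add_mod j p
    rw [Nat.mul_add, Nat.mul_add] at hmul
    omega

theorem noCarry_pow_sub_one_sub {p n j : ℕ} (hj : j < p ^ n) :
    NoCarry p n (p ^ n - 1 - j) j := by
  induction n generalizing j with
  | zero => intro s hs; omega
  | succ n ih =>
    have hp : 0 < p := Nat.pos_of_ne_zero (by rintro rfl; simp at hj)
    rw [pow_succ'] at hj
    have hq : j / p < p ^ n := Nat.div_lt_of_lt_mul hj
    have hr : j % p < p := Nat.mod_lt j hp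
    have hsplit : p * p ^ n - 1 - j = p * (p ^ n - 1 - j / p) + (p - 1 - j % p) := by
      obtain ⟨k, hk⟩ := Nat.exists_eq_add_of_lt hq
      have := Nat.div_add_mod j p
      rw [hk, Nat.add_sub_cancel, Nat.add_sub_cancel_left, Nat.mul_add, Nat.mul_add]
      omega
    rw [noCarry_succ_iff, pow_succ', hsplit, Nat.mul_add_mod, Nat.mul_add_div hp,
      Nat.mod_eq_of_lt (show p - 1 - j % p < p by omega),
      Nat.div_eq_of_lt (show p - 1 - j % p < p by omega), Nat.add_zero]
    exact ⟨by omega, ih hq⟩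

theorem dfun_mono {p : ℕ} (hp : 0 < p) (n : ℕ) (h : ℤ) : Monotone (dfun p n h) :=
  fun _ _ hij => Int.ediv_le_ediv (by positivity)
    (by have := (Nat.cast_le (α := ℤ)).mpr hij; linarith)

theorem dfun_eq_ite {p n : ℕ} {h : ℤ} (h1 : 2 - (p : ℤ) ^ n ≤ h) (h2 : h ≤ 1) {m : ℕ}
    (hm : m < p ^ n) : dfun p n h m = if (p : ℤ) ^ n - 1 + h ≤ m then 1 else 0 := by
  have hmN : (m : ℤ) < (p : ℤ) ^ n := by exact_mod_cast hm
  unfold dfun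
  split_ifs with ht
  · rw [Int.ediv_eq_iff_of_pos (by linarith)]
    constructor <;> linarith
  · exact Int.ediv_eq_zero_of_lt (by linarith) (by linarith)

theorem wfun_le {p n i j : ℕ} (hp : 0 < p) (h : ℤ) (hi : i < p ^ n) (hc : NoCarry p n i j) :
    wfun p n h j ≤ dfun p n h (i + j) - dfun p n h i := by
  refine csInf_le ⟨0, ?_⟩ ⟨i, hi, hc, rfl⟩
  rintro _ ⟨i', -, -, rfl⟩
  exact sub_nonneg.mpr (dfun_mono hp n h (Nat.le_add_right i' j))

theorem le_wfun {p n j : ℕ} (hp : 0 < p) {h c : ℤ}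
    (hc : ∀ i < p ^ n, NoCarry p n i j → c ≤ dfun p n h (i + j) - dfun p n h i) :
    c ≤ wfun p n h j := by
  refine le_csInf ⟨_, 0, Nat.pow_pos hp, noCarry_zero_left hp n j, rfl⟩ ?_
  rintro _ ⟨i, hi, hic, rfl⟩
  exact hc i hi hic

theorem dfun_le_dfun_add_sub_dfun {p n i j : ℕ} {h : ℤ} (h1 : 2 - (p : ℤ) ^ n ≤ h) (h2 : h ≤ 1)
    (hh : 1 - (p : ℤ) ^ n < 2 * h) (hij : i + j < p ^ n) :
    dfun p n h j ≤ dfun p n h (i + j) - dfun p n h i := by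
  have hijN : ((i + j : ℕ) : ℤ) < (p : ℤ) ^ n := by exact_mod_cast hij
  rw [dfun_eq_ite h1 h2 hij, dfun_eq_ite h1 h2 (show i < p ^ n by omega),
    dfun_eq_ite h1 h2 (show j < p ^ n by omega)]
  push_cast at hijN ⊢
  split_ifs <;> linarith

theorem wfun_eq_dfun_of_lt_two_mul {p n j : ℕ} (hp : 0 < p) {h : ℤ} (h1 : 2 - (p : ℤ) ^ n ≤ h)
    (h2 : h ≤ 1) (hh : 1 - (p : ℤ) ^ n < 2 * h) (hj : j < p ^ n) :
    wfun p n h j = dfun p n h j := by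
  apply le_antisymm
  · have hd0 : dfun p n h 0 = 0 := by
      rw [dfun_eq_ite h1 h2 (Nat.pow_pos hp), if_neg (by push_cast; linarith)]
    simpa [hd0] using wfun_le hp h (Nat.pow_pos hp) (noCarry_zero_left hp n j)
  · exact le_wfun hp fun i hi hc => dfun_le_dfun_add_sub_dfun h1 h2 hh (hc.add_lt_pow hi hj)

theorem wfun_lt_dfun_of_two_mul_le {p n t : ℕ} (hp : 0 < p) {h : ℤ} (h1 : 2 - (p : ℤ) ^ n ≤ h)
    (h2 : h ≤ 1) (hle : 2 * h ≤ 1 - (p : ℤ) ^ n) (ht : (t : ℤ) = (p : ℤ) ^ n - 1 + h) :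
    wfun p n h t < dfun p n h t := by
  have htN : t < p ^ n := by zify; linarith
  have hpos : 0 < p ^ n := Nat.pow_pos hp
  have hi : p ^ n - 1 - t < p ^ n := by omega
  have hcompl : ((p ^ n - 1 - t : ℕ) : ℤ) = -h := by
    rw [Nat.cast_sub (by omega), Nat.cast_sub hpos, ht]
    push_cast
    ring
  have hd_t : dfun p n h t = 1 := by rw [dfun_eq_ite h1 h2 htN, if_pos ht.ge]
  have hd_compl : dfun p n h (p ^ n - 1 - t) = 1 := by
    rw [dfun_eq_ite h1 h2 hi, if_pos (by rw [hcompl]; linarith)]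
  have hd_top : dfun p n h (p ^ n - 1 - t + t) = 1 := by
    rw [dfun_eq_ite h1 h2 (by omega), if_pos]
    rw [Nat.cast_add, hcompl, ht]
    linarith
  have hw := wfun_le hp h hi (noCarry_pow_sub_one_sub htN)
  rw [hd_compl, hd_top] at hw
  rw [hd_t]
  linarith

theorem wfun_eq_dfun_iff_general
    (p : ℕ) [Fact p.Prime] (n : ℕ)
    (h : ℤ) (h1 : 2 - (p : ℤ) ^ n ≤ h) (h2 : h ≤ 1) :
    (∀ j : ℕ, j < p ^ n → wfun p n h j = dfun p n h j) ↔ 1 - (p : ℤ) ^ n < 2 * h := by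
  have hp : 0 < p := (Fact.out : p.Prime).pos
  refine ⟨fun H => ?_, fun hh j hj => wfun_eq_dfun_of_lt_two_mul hp h1 h2 hh hj⟩
  by_contra! hle
  obtain ⟨t, ht⟩ : ∃ t : ℕ, (t : ℤ) = (p : ℤ) ^ n - 1 + h :=
    ⟨_, Int.toNat_of_nonneg (by linarith)⟩
  have htN : t < p ^ n := by zify; linarith
  exact (wfun_lt_dfun_of_two_mul_le hp h1 h2 hle ht).ne (H t htN)

/-- For `2 - p^n ≤ h ≤ 1`, one has `w_h(j) = d_h(j)` for all
`0 ≤ j ≤ p^n - 1` if and only if `2h > 1 - p^n`. -/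
theorem wfun_eq_dfun_iff
    (p : ℕ) [Fact p.Prime] (n : ℕ) (hn : 2 ≤ n)
    (h : ℤ) (h1 : 2 - (p : ℤ) ^ n ≤ h) (h2 : h ≤ 1) :
    (∀ j : ℕ, j < p ^ n → wfun p n h j = dfun p n h j) ↔ 1 - (p : ℤ) ^ n < 2 * h :=
  wfun_eq_dfun_iff_general p n h h1 h2
end
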